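/- The permute-and-flip distribution with scores q and rate λ is equal, as a probability distribution on Fin k, to the Algorithm-A distribution with the same scores q and rate λ. -/

import Mathlib

/-!
Both sides are the integral of `c b = 1[b i] / #{j | b j}` against the law of a vector `b` of
independent coins with biases `p j = exp (λ (q j - q*))`. For permute-and-flip, given the coins,
the uniform permutation lists each of the `#{j | b j}` heads first with the same probability,
since composing with the transposition of two heads is a bijection between the corresponding sets
of permutations. For Algorithm A, the coins `b j = 1[q* ≤ q j + X j]` are independent with
`P(X j ≥ q* - q j) = exp (-λ (q* - q j)) = p j`.
-/

open MeasureTheory ProbabilityTheory Real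
open scoped ENNReal

/-- The Bernoulli distribution on `Bool` with success probability `p`
(a probability measure whenever `0 ≤ p ≤ 1`). -/
noncomputable def bernoulliMeasure (p : ℝ) : Measure Bool :=
  ENNReal.ofReal p • Measure.dirac true + ENNReal.ofReal (1 - p) • Measure.dirac false

/-- Every function on the permutation group of `Fin k` is measurable (discrete σ-algebra). -/
instance (n : ℕ) : MeasurableSpace (Equiv.Perm (Fin n)) := ⊤

/-- The joint law of a uniformly random permutation of `Fin k` together with (independent of it)
independent Bernoulli coins, the `i`-th having success probability `p i`. -/
noncomputable def permCoinsMeasure (k : ℕ) (p : Fin k → ℝ) :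
    Measure (Equiv.Perm (Fin k) × (Fin k → Bool)) :=
  ((PMF.uniformOfFintype (Equiv.Perm (Fin k))).toMeasure).prod
    (Measure.pi fun i => bernoulliMeasure (p i))

open Finset

namespace Equiv.Perm

variable {α : Type*} [LinearOrder α]

/-- `σ.symm j` is the position of `j` in the order in which `σ` lists the elements. -/
def IsFirstIn (σ : Perm α) (T : Finset α) (i : α) : Prop := ∀ j ∈ T, σ.symm i ≤ σ.symm j

instance (σ : Perm α) (T : Finset α) (i : α) : Decidable (σ.IsFirstIn T i) := by
  unfold IsFirstIn; infer_instance

variable {σ τ : Perm α} {T : Finset α} {i j : α}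

lemma isFirstIn_mul_iff (hτ : ∀ l, τ l ∈ T ↔ l ∈ T) :
    (τ * σ).IsFirstIn T i ↔ σ.IsFirstIn T (τ⁻¹ i) := by
  simp only [IsFirstIn, mul_def, inv_def, symm_trans_apply]
  refine ⟨fun h l hl => ?_, fun h l hl => h _ ?_⟩
  · simpa using h (τ l) ((hτ l).2 hl)
  · rwa [← hτ, apply_symm_apply]

lemma existsUnique_isFirstIn (σ : Perm α) (hT : T.Nonempty) :
    ∃! i, i ∈ T ∧ σ.IsFirstIn T i := by
  obtain ⟨i, hi, hmin⟩ := T.exists_min_image σ.symm hT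
  refine ⟨i, ⟨hi, hmin⟩, fun j ⟨hj, hjmin⟩ => σ.symm.injective ?_⟩
  exact le_antisymm (hjmin i hi) (hmin j hj)

variable [Fintype α] [DecidableEq α]

lemma card_isFirstIn_eq (hi : i ∈ T) (hj : j ∈ T) :
    #{σ : Perm α | σ.IsFirstIn T i} = #{σ : Perm α | σ.IsFirstIn T j} := by
  have hswap : ∀ l, swap i j l ∈ T ↔ l ∈ T := by
    intro l
    rw [swap_apply_def]
    split_ifs <;> simp_all
  refine card_equiv (Equiv.mulLeft (swap i j)) fun σ => ?_
  simp [isFirstIn_mul_iff hswap]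

lemma card_mul_card_isFirstIn (hi : i ∈ T) :
    #T * #{σ : Perm α | σ.IsFirstIn T i} = (Fintype.card α).factorial := by
  calc #T * #{σ : Perm α | σ.IsFirstIn T i}
      = ∑ j ∈ T, #{σ : Perm α | σ.IsFirstIn T j} := by
        rw [sum_congr rfl fun j hj => card_isFirstIn_eq hj hi, sum_const, smul_eq_mul]
    _ = ∑ σ : Perm α, #{j ∈ T | σ.IsFirstIn T j} := by
        simp only [card_filter]
        exact sum_comm
    _ = ∑ _σ : Perm α, 1 := by
        refine sum_congr rfl fun σ _ => card_eq_one.2 ?_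
        obtain ⟨j, hj, huniq⟩ := σ.existsUnique_isFirstIn ⟨i, hi⟩
        exact ⟨j, by ext l; simpa using ⟨fun h => huniq l h, fun h => h ▸ hj⟩⟩
    _ = (Fintype.card α).factorial := by simp [Fintype.card_perm]

end Equiv.Perm

lemma PMF.toOuterMeasure_uniformOfFintype_isFirstIn {α : Type*} [LinearOrder α] [Fintype α]
    [DecidableEq α] {T : Finset α} {i : α} (hi : i ∈ T) :
    (PMF.uniformOfFintype (Equiv.Perm α)).toOuterMeasure {σ | σ.IsFirstIn T i}
      = (#T : ℝ≥0∞)⁻¹ := by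
  have hcard := Equiv.Perm.card_mul_card_isFirstIn hi
  have hpos : #{σ : Equiv.Perm α | σ.IsFirstIn T i} ≠ 0 := by
    rintro h
    rw [h, mul_zero] at hcard
    exact Nat.factorial_ne_zero _ hcard.symm
  rw [PMF.toOuterMeasure_uniformOfFintype_apply, Fintype.card_perm, ← hcard,
    Fintype.card_subtype, Nat.cast_mul]
  simp only [Set.mem_ofPred_eq]
  nth_rw 1 [← one_mul (#{σ : Equiv.Perm α | σ.IsFirstIn T i} : ℝ≥0∞)]
  rw [ENNReal.mul_div_mul_right _ _ (by exact_mod_cast hpos) (ENNReal.natCast_ne_top _), one_div]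

instance (n : ℕ) : DiscreteMeasurableSpace (Equiv.Perm (Fin n)) := ⟨fun _ => trivial⟩

instance (p : ℝ) : IsFiniteMeasure (_root_.bernoulliMeasure p) :=
  ⟨by simp [_root_.bernoulliMeasure]⟩

lemma permCoinsMeasure_firstHead_eq_lintegral (k : ℕ) (p : Fin k → ℝ) (i : Fin k) :
    permCoinsMeasure k p
        {w | w.2 i = true ∧ ∀ j : Fin k, w.1.symm j < w.1.symm i → w.2 j = false}
      = ∫⁻ b, (if b i then (#{j | b j} : ℝ≥0∞)⁻¹ else 0)
          ∂(Measure.pi fun j => _root_.bernoulliMeasure (p j)) := by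
  rw [permCoinsMeasure, Measure.prod_apply_symm (Set.to_countable _).measurableSet]
  refine lintegral_congr fun b => ?_
  by_cases hbi : b i
  · have hslice : (fun σ => (σ, b)) ⁻¹'
          {w : Equiv.Perm (Fin k) × (Fin k → Bool) |
            w.2 i = true ∧ ∀ j : Fin k, w.1.symm j < w.1.symm i → w.2 j = false}
        = {σ | σ.IsFirstIn {j | b j} i} := by
      ext σ
      simp only [Equiv.Perm.IsFirstIn, Set.mem_preimage, Set.mem_ofPred_eq, hbi, true_and,
        Finset.mem_filter, Finset.mem_univ]
      exact forall_congr' fun j => by rw [← not_imp_not, not_lt, Bool.not_eq_false]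
    rw [hslice, PMF.toMeasure_apply_eq_toOuterMeasure_apply _ (Set.to_countable _).measurableSet,
      PMF.toOuterMeasure_uniformOfFintype_isFirstIn (by simpa using hbi), if_pos hbi]
  · simp [hbi]

namespace MeasureTheory.Measure

lemma map_eq_bernoulliMeasure {Ω : Type*} [MeasurableSpace Ω] (μ : Measure Ω)
    [IsProbabilityMeasure μ] {f : Ω → Bool} (hf : Measurable f) :
    μ.map f = _root_.bernoulliMeasure (μ.real (f ⁻¹' {true})) := by
  have htrue : MeasurableSet (f ⁻¹' {true}) := hf (measurableSet_singleton true)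
  refine ext_of_singleton fun b => ?_
  rw [map_apply hf (measurableSet_singleton b)]
  cases b
  · have hfalse : f ⁻¹' {false} = (f ⁻¹' {true})ᶜ := by ext; simp
    simp [_root_.bernoulliMeasure, hfalse, ← probReal_compl_eq_one_sub htrue]
  · simp [_root_.bernoulliMeasure]

lemma pi_map_eq_pi_bernoulliMeasure {ι : Type*} [Fintype ι] {Ω : ι → Type*}
    [∀ j, MeasurableSpace (Ω j)] (μ : ∀ j, Measure (Ω j)) [∀ j, IsProbabilityMeasure (μ j)]
    {f : ∀ j, Ω j → Bool} (hf : ∀ j, Measurable (f j)) :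
    (Measure.pi μ).map (fun x j => f j (x j))
      = Measure.pi fun j => _root_.bernoulliMeasure ((μ j).real (f j ⁻¹' {true})) := by
  have := fun j => isProbabilityMeasure_map (μ := μ j) (hf j).aemeasurable
  rw [pi_map_pi fun j => (hf j).aemeasurable]
  simp_rw [map_eq_bernoulliMeasure _ (hf _)]

end MeasureTheory.Measure

lemma ProbabilityTheory.expMeasure_real_Ici {r : ℝ} (hr : 0 < r) {t : ℝ} (ht : 0 ≤ t) :
    (expMeasure r).real (Set.Ici t) = exp (-(r * t)) := by
  have := isProbabilityMeasure_expMeasure hr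
  have hnoatom : expMeasure r {t} = 0 :=
    withDensity_absolutelyContinuous _ _ (measure_singleton t)
  rw [← Set.compl_Iio, probReal_compl_eq_one_sub measurableSet_Iio,
    measureReal_congr (Iio_ae_eq_Iic' hnoatom), ← cdf_eq_real, cdf_expMeasure_eq hr, if_pos ht]
  ring

/-- **Permute-and-flip = Algorithm A.**
For every outcome `i : Fin k`, the probability that permute-and-flip (with scores `q`, rate `lam`)
outputs `i` (i.e. that the coin of `i` lands heads and all coins of indices preceding `i` in the
random order land tails) equals the probability that Algorithm A outputs `i`, namely the expected
value, over i.i.d. `X j ~ Expo(lam)`, of the probability `1/|S|·1[i ∈ S]` that a uniformly random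
element of `S = {j | q j + X j ≥ q*}` equals `i`. -/
theorem permuteAndFlip_eq_algorithmA
    (k : ℕ) (q : Fin k → ℝ) (lam : ℝ) (hlam : 0 < lam)
    (qstar : ℝ) (hqstar : IsGreatest (Set.range q) qstar) :
    ∀ i : Fin k,
      permCoinsMeasure k (fun j => exp (lam * (q j - qstar)))
        {w | w.2 i = true ∧ ∀ j : Fin k, w.1.symm j < w.1.symm i → w.2 j = false}
      = ∫⁻ x, (if qstar ≤ q i + x i then
            (((Finset.univ.filter (fun j : Fin k => qstar ≤ q j + x j)).card : ℝ≥0∞))⁻¹ else 0)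
          ∂(Measure.pi fun _ : Fin k => expMeasure lam) := by
  intro i
  have := isProbabilityMeasure_expMeasure hlam
  have hsurvive : ∀ j, (fun t => decide (qstar ≤ q j + t)) ⁻¹' {true} = Set.Ici (qstar - q j) :=
    fun j => by
      ext t
      simp only [Set.mem_preimage, Set.mem_singleton_iff, decide_eq_true_eq, Set.mem_Ici,
        sub_le_iff_le_add']
  have hmeas : ∀ j, Measurable fun t => decide (qstar ≤ q j + t) :=
    fun j => measurable_to_bool (by rw [hsurvive]; exact measurableSet_Ici)
  have hcoins : (Measure.pi fun _ : Fin k => expMeasure lam).map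
      (fun x j => decide (qstar ≤ q j + x j))
        = Measure.pi fun j => bernoulliMeasure (exp (lam * (q j - qstar))) := by
    rw [Measure.pi_map_eq_pi_bernoulliMeasure _ hmeas]
    congr with j
    rw [hsurvive, expMeasure_real_Ici hlam (sub_nonneg.2 (hqstar.2 ⟨j, rfl⟩))]
    ring_nf
  have hF : Measurable fun (x : Fin k → ℝ) j => decide (qstar ≤ q j + x j) :=
    measurable_pi_lambda _ fun j => (hmeas j).comp (measurable_pi_apply j)
  rw [permCoinsMeasure_firstHead_eq_lintegral, ← hcoins, lintegral_map (measurable_of_countable _) hF]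
  simp
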